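/- arXiv:1412.6458 — 4 statements merged into one kernel-verified Lean document; each statement's English description precedes it below -/
import Mathlib

section
/- Let f : [0,T] → ℝ^d be C¹ on [0,T] and locally W^{2,1} on (0,T), with f(t) ≠ 0 for almost every t. Let 0 < θ < 1 and h(λ) = λ^{-θ}, with primitive H(λ) = λ^{1-θ}/(1-θ). Assume that ∫_ε^{T-ε} h(|f(t)|) dt < ∞ for every ε > 0. Then there exists a constant C₂ > 0 depending only on ‖f‖_∞ and θ such that ∫_0^T |f'(t)|² h(|f(t)|) dt ≤ C₂ ∫_0^T |f''(t)| dt + R(f,T) − R(f,0), where R(f,t) = (f(t)·f'(t)/|f(t)|) H(|f(t)|) if f(t) ≠ 0 and R(f,t) = 0 if f(t) = 0. -/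
/-
Write `w_δ(x) = (|x|² + δ)^{-θ/2}` for `δ > 0`. On `[a, b] ⊂ (0, T)` the function `f'` is absolutely
continuous, and integrating `⟪w_δ(f) f, f'⟫` by parts gives
`∫ ⟪(w_δ(f) f)', f'⟫ = [⟪f, f'⟫ w_δ(f)]_a^b - ∫ ⟪w_δ(f) f, f''⟫`.
By Cauchy–Schwarz the first integrand is at least `(1 - θ) |f'|² w_δ(f)`, and
`|w_δ(f) f| ≤ |f|^{1-θ}` bounds the last integral by `‖f‖_∞^{1-θ} ∫ |f''|`. Monotone convergence
(`f ≠ 0` a.e.) lets `δ → 0`, and continuity of `R(f, ·)` on `[0, T]` lets `a → 0`, `b → T`.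

Only `|f''|` is assumed integrable, so `∫ f''` may be a junk value; what survives is
`|f'(t) - f'(s)| ≤ |∫_s^t |f''||`. Hence the a.e. derivative `deriv f'` is used in place of `f''`,
its norm being at most `|f''|` a.e.
-/

open MeasureTheory Set Filter Topology Classical
open scoped InnerProductSpace

namespace AbsolutelyContinuousOnInterval

theorem of_dist_le {X Y : Type*} [PseudoMetricSpace X] [PseudoMetricSpace Y]
    {f : ℝ → X} {g : ℝ → Y} {a b : ℝ} (hg : AbsolutelyContinuousOnInterval g a b)
    (h : ∀ s ∈ uIcc a b, ∀ t ∈ uIcc a b, dist (f s) (f t) ≤ dist (g s) (g t)) :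
    AbsolutelyContinuousOnInterval f a b := by
  refine squeeze_zero' (Eventually.of_forall fun _ ↦ Finset.sum_nonneg fun _ _ ↦ dist_nonneg)
    ?_ hg
  rw [eventually_inf_principal]
  filter_upwards with I hI
  exact Finset.sum_le_sum fun i hi ↦ h _ (hI.1 i hi).1 _ (hI.1 i hi).2

variable {E : Type*} [NormedAddCommGroup E] [InnerProductSpace ℝ E]

theorem inner {u v : ℝ → E} {a b : ℝ} (hu : AbsolutelyContinuousOnInterval u a b)
    (hv : AbsolutelyContinuousOnInterval v a b) :
    AbsolutelyContinuousOnInterval (fun t ↦ ⟪u t, v t⟫_ℝ) a b := by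
  obtain ⟨C, hC⟩ := hu.exists_bound
  obtain ⟨D, hD⟩ := hv.exists_bound
  unfold AbsolutelyContinuousOnInterval at hu hv
  refine squeeze_zero' (Eventually.of_forall fun _ ↦ Finset.sum_nonneg fun _ _ ↦ dist_nonneg)
    ?_ (by simpa using (hv.const_mul C).add (hu.const_mul D))
  rw [eventually_inf_principal]
  filter_upwards with I hI
  simp only [Finset.mul_sum, ← Finset.sum_add_distrib]
  gcongr with i hi
  obtain ⟨hs, ht⟩ := hI.1 i hi
  set s := (I.2 i).1
  set t := (I.2 i).2
  have hsplit : ⟪u s, v s⟫_ℝ - ⟪u t, v t⟫_ℝ = ⟪u s, v s - v t⟫_ℝ + ⟪u s - u t, v t⟫_ℝ := by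
    simp only [inner_sub_left, inner_sub_right]; ring
  rw [Real.dist_eq, hsplit, dist_eq_norm, dist_eq_norm]
  calc _ ≤ ‖u s‖ * ‖v s - v t‖ + ‖u s - u t‖ * ‖v t‖ :=
        (abs_add_le _ _).trans
          (add_le_add (abs_real_inner_le_norm _ _) (abs_real_inner_le_norm _ _))
    _ ≤ C * ‖v s - v t‖ + D * ‖u s - u t‖ := by
        rw [mul_comm ‖u s - u t‖]
        gcongr
        exacts [hC s hs, hD t ht]

end AbsolutelyContinuousOnInterval

section Calculus

variable {F : Type*} [NormedAddCommGroup F] [NormedSpace ℝ F]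

theorem absolutelyContinuousOnInterval_of_hasDerivAt {u u' : ℝ → F} {a b : ℝ} (hab : a ≤ b)
    (hu : ∀ t ∈ Icc a b, HasDerivAt u (u' t) t) (hu' : ContinuousOn u' (Icc a b)) :
    AbsolutelyContinuousOnInterval u a b := by
  obtain ⟨C, hC⟩ := isCompact_Icc.exists_bound_of_continuousOn hu'
  refine LipschitzOnWith.absolutelyContinuousOnInterval (K := C.toNNReal) ?_
  rw [uIcc_of_le hab]
  refine (convex_Icc a b).lipschitzOnWith_of_nnnorm_hasDerivWithin_le
    (fun t ht ↦ (hu t ht).hasDerivWithinAt) fun t ht ↦ ?_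
  rw [← NNReal.coe_le_coe, coe_nnnorm]
  exact (hC t ht).trans (Real.le_coe_toNNReal C)

theorem norm_deriv_le_of_dist_le {v : ℝ → F} {Φ : ℝ → ℝ} {t φ : ℝ} (hΦ : HasDerivAt Φ φ t)
    (h : ∀ᶠ s in 𝓝 t, dist (v s) (v t) ≤ dist (Φ s) (Φ t)) : ‖deriv v t‖ ≤ |φ| := by
  by_cases hv : DifferentiableAt ℝ v t
  swap
  · rw [deriv_zero_of_not_differentiableAt hv, norm_zero]
    exact abs_nonneg φ
  refine le_of_tendsto_of_tendsto (hasDerivAt_iff_tendsto_slope.1 hv.hasDerivAt).norm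
    (hasDerivAt_iff_tendsto_slope.1 hΦ).abs ?_
  filter_upwards [nhdsWithin_le_nhds h] with s hs
  rw [slope_def_module, slope_def_field, norm_smul, norm_inv, Real.norm_eq_abs, abs_div,
    div_eq_inv_mul]
  rw [dist_eq_norm, Real.dist_eq] at hs
  gcongr

theorem ae_norm_deriv_le_of_dist_le {v : ℝ → F} {g : ℝ → ℝ} {a b : ℝ}
    (hg : IntervalIntegrable g volume a b)
    (h : ∀ s ∈ Icc a b, ∀ t ∈ Icc a b,
      dist (v s) (v t) ≤ dist (∫ x in a..s, g x) (∫ x in a..t, g x)) :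
    ∀ᵐ t, t ∈ Ioc a b → ‖deriv v t‖ ≤ |g t| := by
  have hb : ∀ᵐ t, t ≠ b := by simp [ae_iff, measure_singleton]
  filter_upwards [hg.ae_hasDerivAt_integral, hb] with t hderiv htb ht
  have ht' : t ∈ Ioo a b := ⟨ht.1, lt_of_le_of_ne ht.2 htb⟩
  refine norm_deriv_le_of_dist_le
    (hderiv (uIoc_subset_uIcc (uIoc_of_le (ht.1.le.trans ht.2) ▸ ht)) a left_mem_uIcc) ?_
  filter_upwards [Icc_mem_nhds ht'.1 ht'.2] with s hs
  exact h s hs t (Ioo_subset_Icc_self ht')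

end Calculus

theorem intervalIntegral.integral_inner_deriv_eq_sub {E : Type*} [NormedAddCommGroup E]
    [InnerProductSpace ℝ E] [FiniteDimensional ℝ E] {u u' v : ℝ → E} {a b : ℝ} (hab : a ≤ b)
    (hu : ∀ t ∈ Icc a b, HasDerivAt u (u' t) t) (hu' : ContinuousOn u' (Icc a b))
    (hv : AbsolutelyContinuousOnInterval v a b) :
    ∫ t in a..b, ⟪u t, deriv v t⟫_ℝ =
      ⟪u b, v b⟫_ℝ - ⟪u a, v a⟫_ℝ - ∫ t in a..b, ⟪u' t, v t⟫_ℝ := by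
  have hG := (absolutelyContinuousOnInterval_of_hasDerivAt hab hu hu').inner hv
  have hderiv : ∀ᵐ t, t ∈ uIoc a b →
      ⟪u t, deriv v t⟫_ℝ = deriv (fun t ↦ ⟪u t, v t⟫_ℝ) t - ⟪u' t, v t⟫_ℝ := by
    filter_upwards [hv.boundedVariationOn.ae_differentiableAt_of_mem_uIcc] with t hvt ht
    have ht' : t ∈ Icc a b := uIcc_of_le hab ▸ uIoc_subset_uIcc ht
    rw [((hu t ht').inner ℝ (hvt (uIoc_subset_uIcc ht)).hasDerivAt).deriv]
    ring
  have hcont : ContinuousOn (fun t ↦ ⟪u' t, v t⟫_ℝ) (uIcc a b) :=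
    (uIcc_of_le hab ▸ hu').inner hv.continuousOn
  rw [intervalIntegral.integral_congr_ae hderiv,
    intervalIntegral.integral_sub hG.intervalIntegrable_deriv hcont.intervalIntegrable,
    hG.integral_deriv_eq_sub]

theorem MeasureTheory.Measure.measure_Ioo_le_of_tendsto {μ : Measure ℝ} {a b : ℝ}
    {F : ℝ → ENNReal} {L : ENNReal} (hF : Tendsto F (𝓝[>] 0) (𝓝 L))
    (h : ∀ᶠ ε in 𝓝[>] 0, μ (Ioc (a + ε) (b - ε)) ≤ F ε) : μ (Ioo a b) ≤ L := by
  set ε : ℕ → ℝ := fun n ↦ 1 / (n + 1)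
  have hε : Tendsto ε atTop (𝓝[>] 0) :=
    tendsto_nhdsWithin_of_tendsto_nhds_of_eventually_within _
      tendsto_one_div_add_atTop_nhds_zero_nat
      (Eventually.of_forall fun n ↦ show 0 < ε n from Nat.one_div_pos_of_nat)
  have hmono : Monotone fun n ↦ Ioc (a + ε n) (b - ε n) := fun m n hmn ↦
    Ioc_subset_Ioc (by gcongr; exact Nat.one_div_le_one_div hmn)
      (by gcongr; exact Nat.one_div_le_one_div hmn)
  have hunion : ⋃ n, Ioc (a + ε n) (b - ε n) = Ioo a b := by
    ext x
    simp only [mem_iUnion, mem_Ioc, mem_Ioo]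
    constructor
    · rintro ⟨n, h₁, h₂⟩
      have := Nat.one_div_pos_of_nat (α := ℝ) (n := n)
      constructor <;> linarith
    · rintro ⟨h₁, h₂⟩
      obtain ⟨n, hn⟩ := exists_nat_one_div_lt (lt_min (sub_pos.2 h₁) (sub_pos.2 h₂))
      refine ⟨n, ?_, ?_⟩ <;> linarith [min_le_left (x - a) (b - x), min_le_right (x - a) (b - x)]
  rw [← hunion]
  exact le_of_tendsto_of_tendsto (tendsto_measure_iUnion_atTop hmono) (hF.comp hε) (hε.eventually h)

theorem ContinuousOn.tendsto_sub_endpoints {R : ℝ → ℝ} {a b : ℝ} (hR : ContinuousOn R (Icc a b))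
    (hab : a < b) :
    Tendsto (fun ε ↦ R (b - ε) - R (a + ε)) (𝓝[>] 0) (𝓝 (R b - R a)) := by
  have hmem : ∀ᶠ ε in 𝓝[>] (0 : ℝ), a + ε ∈ Icc a b ∧ b - ε ∈ Icc a b := by
    filter_upwards [Ioo_mem_nhdsGT (sub_pos.2 hab)] with ε hε
    exact ⟨⟨by linarith [hε.1], by linarith [hε.2]⟩, ⟨by linarith [hε.2], by linarith [hε.1]⟩⟩
  have hb := (hR b (right_mem_Icc.2 hab.le)).tendsto.comp
    (tendsto_nhdsWithin_of_tendsto_nhds_of_eventually_within _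
      (by simpa using ((continuous_sub_left b).tendsto 0).mono_left nhdsWithin_le_nhds)
      (hmem.mono fun _ h ↦ h.2))
  have ha := (hR a (left_mem_Icc.2 hab.le)).tendsto.comp
    (tendsto_nhdsWithin_of_tendsto_nhds_of_eventually_within _
      (by simpa using ((continuous_const_add a).tendsto 0).mono_left nhdsWithin_le_nhds)
      (hmem.mono fun _ h ↦ h.1))
  exact hb.sub ha

section Weight

variable {E : Type*} [NormedAddCommGroup E] {θ δ : ℝ}

/-- Regularisation of the weight `h(|x|) = |x|^{-θ}`, increasing to it as `δ ↓ 0`. -/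
noncomputable def regWeight (θ δ : ℝ) (x : E) : ℝ := (‖x‖ ^ 2 + δ) ^ (-θ / 2)

theorem Real.mul_rpow_neg_eq_rpow_one_sub {r : ℝ} (hr : 0 ≤ r) (hθ : θ < 1) :
    r * r ^ (-θ) = r ^ (1 - θ) := by
  rcases hr.eq_or_lt with rfl | hr
  · rw [zero_mul, Real.zero_rpow (by linarith)]
  · rw [sub_eq_add_neg, Real.rpow_add hr, Real.rpow_one]

theorem regWeight_nonneg (hδ : 0 ≤ δ) (x : E) : 0 ≤ regWeight θ δ x :=
  Real.rpow_nonneg (by positivity) _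

theorem regWeight_zero (θ : ℝ) (x : E) : regWeight θ 0 x = ‖x‖ ^ (-θ) := by
  rw [regWeight, add_zero, ← Real.rpow_natCast, ← Real.rpow_mul (norm_nonneg x)]
  congr 1
  ring

theorem regWeight_anti {δ₁ δ₂ : ℝ} (hθ : 0 ≤ θ) {x : E} (hx : 0 < ‖x‖ ^ 2 + δ₁)
    (hδ : δ₁ ≤ δ₂) : regWeight θ δ₂ x ≤ regWeight θ δ₁ x :=
  Real.rpow_le_rpow_of_nonpos hx (by linarith) (by linarith)

theorem tendsto_regWeight {x : E} (hx : x ≠ 0) :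
    Tendsto (fun δ ↦ regWeight θ δ x) (𝓝 0) (𝓝 (‖x‖ ^ (-θ))) := by
  rw [← regWeight_zero]
  refine ((continuous_const.add continuous_id).continuousAt).rpow_const (Or.inl ?_)
  simp [hx]

theorem ContinuousOn.regWeight {α : Type*} [TopologicalSpace α] {f : α → E} {s : Set α}
    (hf : ContinuousOn f s) (hδ : 0 < δ) : ContinuousOn (fun t ↦ regWeight θ δ (f t)) s :=
  ((hf.norm.pow 2).add continuousOn_const).rpow_const
    fun _ _ ↦ Or.inl (add_pos_of_nonneg_of_pos (sq_nonneg _) hδ).ne'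

variable [InnerProductSpace ℝ E]

theorem HasDerivAt.regWeight_smul {f : ℝ → E} {f' : E} {t : ℝ} (hf : HasDerivAt f f' t)
    (hδ : 0 < δ) :
    HasDerivAt (fun s ↦ regWeight θ δ (f s) • f s)
      (regWeight θ δ (f t) • f' +
        (2 * ⟪f t, f'⟫_ℝ * (-θ / 2) * (‖f t‖ ^ 2 + δ) ^ (-θ / 2 - 1)) • f t) t := by
  have hw := (hf.norm_sq.add_const δ).rpow_const (p := -θ / 2) (Or.inl (by positivity))
  exact hw.smul hf

/-- The right-hand side is `⟪(w(f) • f)', f'⟫` for `w = regWeight θ δ`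
(see `HasDerivAt.regWeight_smul`); Cauchy–Schwarz absorbs its negative part. -/
theorem one_sub_mul_le_inner_deriv_regWeight_smul (hθ : 0 ≤ θ) (hδ : 0 < δ) (x y : E) :
    (1 - θ) * (‖y‖ ^ 2 * regWeight θ δ x) ≤
      ⟪regWeight θ δ x • y +
        (2 * ⟪x, y⟫_ℝ * (-θ / 2) * (‖x‖ ^ 2 + δ) ^ (-θ / 2 - 1)) • x, y⟫_ℝ := by
  have hb : 0 < ‖x‖ ^ 2 + δ := by positivity
  have hw : (‖x‖ ^ 2 + δ) ^ (-θ / 2 - 1) = regWeight θ δ x / (‖x‖ ^ 2 + δ) := by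
    rw [Real.rpow_sub hb, Real.rpow_one, regWeight]
  have hcs : ⟪x, y⟫_ℝ ^ 2 ≤ (‖x‖ ^ 2 + δ) * ‖y‖ ^ 2 := by
    have := abs_real_inner_le_norm x y
    nlinarith [abs_nonneg ⟪x, y⟫_ℝ, sq_abs ⟪x, y⟫_ℝ, sq_nonneg ‖y‖, norm_nonneg x, norm_nonneg y]
  have hkey : θ * (⟪x, y⟫_ℝ ^ 2 / (‖x‖ ^ 2 + δ)) * regWeight θ δ x ≤
      θ * ‖y‖ ^ 2 * regWeight θ δ x := by
    have hle : ⟪x, y⟫_ℝ ^ 2 / (‖x‖ ^ 2 + δ) ≤ ‖y‖ ^ 2 := by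
      rw [div_le_iff₀ hb]; linarith
    have hw₀ := regWeight_nonneg hδ.le x (θ := θ)
    gcongr
  rw [inner_add_left, real_inner_smul_left, real_inner_smul_left, real_inner_self_eq_norm_sq,
    hw]
  have hneg : 2 * ⟪x, y⟫_ℝ * (-θ / 2) * (regWeight θ δ x / (‖x‖ ^ 2 + δ)) * ⟪x, y⟫_ℝ =
      -(θ * (⟪x, y⟫_ℝ ^ 2 / (‖x‖ ^ 2 + δ)) * regWeight θ δ x) := by ring
  linarith

theorem norm_regWeight_smul_le (hθ : 0 ≤ θ) (hθ₁ : θ < 1) (hδ : 0 < δ) (x : E) :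
    ‖regWeight θ δ x • x‖ ≤ ‖x‖ ^ (1 - θ) := by
  rw [norm_smul, Real.norm_of_nonneg (regWeight_nonneg hδ.le x), mul_comm,
    ← Real.mul_rpow_neg_eq_rpow_one_sub (norm_nonneg x) hθ₁, ← regWeight_zero]
  rcases eq_or_ne x 0 with rfl | hx
  · simp
  · exact mul_le_mul_of_nonneg_left (regWeight_anti hθ (by simp [hx]) hδ.le) (norm_nonneg x)

/-- The boundary term `R(f, t) = boundaryTerm θ (f t) (f' t)`. No case split at `x = 0` is needed,
since the inner product vanishes there (see `ite_eq_boundaryTerm`). -/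
noncomputable def boundaryTerm (θ : ℝ) (x v : E) : ℝ := ⟪x, v⟫_ℝ * ‖x‖ ^ (-θ) / (1 - θ)

theorem ite_eq_boundaryTerm (θ : ℝ) (x v : E) [Decidable (x = 0)] :
    (if x = 0 then 0 else ⟪x, v⟫_ℝ / ‖x‖ * (‖x‖ ^ (1 - θ) / (1 - θ))) = boundaryTerm θ x v := by
  unfold boundaryTerm
  split_ifs with hx
  · simp [hx]
  · have hx' : 0 < ‖x‖ := norm_pos_iff.2 hx
    rw [sub_eq_add_neg 1 θ, Real.rpow_add hx', Real.rpow_one]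
    field_simp

theorem tendsto_inner_mul_regWeight (x v : E) :
    Tendsto (fun δ ↦ ⟪x, v⟫_ℝ * regWeight θ δ x) (𝓝 0) (𝓝 (⟪x, v⟫_ℝ * ‖x‖ ^ (-θ))) := by
  rcases eq_or_ne x 0 with rfl | hx
  · simp
  · exact (tendsto_regWeight hx).const_mul _

theorem abs_inner_mul_rpow_neg_le (hθ : θ < 1) (x v : E) :
    |⟪x, v⟫_ℝ * ‖x‖ ^ (-θ)| ≤ ‖x‖ ^ (1 - θ) * ‖v‖ := by
  rw [abs_mul, abs_of_nonneg (Real.rpow_nonneg (norm_nonneg x) _),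
    ← Real.mul_rpow_neg_eq_rpow_one_sub (norm_nonneg x) hθ]
  calc _ ≤ ‖x‖ * ‖v‖ * ‖x‖ ^ (-θ) :=
        mul_le_mul_of_nonneg_right (abs_real_inner_le_norm x v) (Real.rpow_nonneg (norm_nonneg x) _)
    _ = _ := by ring

theorem continuous_boundaryTerm (hθ : θ < 1) :
    Continuous fun p : E × E ↦ boundaryTerm θ p.1 p.2 := by
  unfold boundaryTerm
  refine continuous_iff_continuousAt.2 fun ⟨x, v⟩ ↦ ?_
  rcases eq_or_ne x 0 with rfl | hx
  · have hbound : Tendsto (fun p : E × E ↦ ‖p.1‖ ^ (1 - θ) * ‖p.2‖ / (1 - θ)) (𝓝 (0, v))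
        (𝓝 0) := by
      have : Continuous fun p : E × E ↦ ‖p.1‖ ^ (1 - θ) * ‖p.2‖ / (1 - θ) :=
        ((continuous_fst.norm.rpow_const fun _ ↦ Or.inr (by linarith)).mul
          continuous_snd.norm).div_const _
      simpa [Real.zero_rpow (by linarith : 1 - θ ≠ 0)] using this.tendsto (0, v)
    rw [ContinuousAt, inner_zero_left, zero_mul, zero_div]
    refine squeeze_zero_norm (fun p : E × E ↦ ?_) hbound
    rw [norm_div, Real.norm_eq_abs, Real.norm_of_nonneg (by linarith : (0 : ℝ) ≤ 1 - θ)]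
    gcongr
    exact abs_inner_mul_rpow_neg_le hθ p.1 p.2
  · have hinner : ContinuousAt (fun p : E × E ↦ ⟪p.1, p.2⟫_ℝ) (x, v) :=
      (continuous_fst.inner continuous_snd).continuousAt
    have hpow : ContinuousAt (fun p : E × E ↦ ‖p.1‖ ^ (-θ)) (x, v) :=
      continuous_fst.norm.continuousAt.rpow_const (Or.inl (norm_ne_zero_iff.2 hx))
    exact (hinner.mul hpow).div_const _

end Weight

section Energy

variable {E : Type*} [NormedAddCommGroup E] [InnerProductSpace ℝ E] [FiniteDimensional ℝ E]
  {f f' f'' : ℝ → E} {g : ℝ → ℝ} {a b θ M T : ℝ}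

theorem one_sub_mul_integral_norm_sq_mul_regWeight_le {δ : ℝ} (hab : a ≤ b) (hθ₀ : 0 ≤ θ)
    (hθ₁ : θ < 1) (hδ : 0 < δ) (hf : ∀ t ∈ Icc a b, HasDerivAt f (f' t) t)
    (hf' : ContinuousOn f' (Icc a b)) (hg : IntervalIntegrable g volume a b)
    (hf'g : ∀ s ∈ Icc a b, ∀ t ∈ Icc a b,
      dist (f' s) (f' t) ≤ dist (∫ x in a..s, g x) (∫ x in a..t, g x))
    (hM : ∀ t ∈ Icc a b, ‖f t‖ ≤ M) :
    (1 - θ) * ∫ t in a..b, ‖f' t‖ ^ 2 * regWeight θ δ (f t) ≤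
      M ^ (1 - θ) * (∫ t in a..b, |g t|) +
        (⟪f b, f' b⟫_ℝ * regWeight θ δ (f b) - ⟪f a, f' a⟫_ℝ * regWeight θ δ (f a)) := by
  have hfc : ContinuousOn f (Icc a b) := fun t ht ↦ (hf t ht).continuousAt.continuousWithinAt
  set u' : ℝ → E := fun t ↦ regWeight θ δ (f t) • f' t +
    (2 * ⟪f t, f' t⟫_ℝ * (-θ / 2) * (‖f t‖ ^ 2 + δ) ^ (-θ / 2 - 1)) • f t
  have hpow : ContinuousOn (fun t ↦ (‖f t‖ ^ 2 + δ) ^ (-θ / 2 - 1)) (Icc a b) :=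
    ((hfc.norm.pow 2).add continuousOn_const).rpow_const
      fun _ _ ↦ Or.inl (add_pos_of_nonneg_of_pos (sq_nonneg _) hδ).ne'
  have hu' : ContinuousOn u' (Icc a b) :=
    ((hfc.regWeight hδ).smul hf').add
      ((((continuousOn_const.mul (hfc.inner hf')).mul continuousOn_const).mul hpow).smul hfc)
  have hv : AbsolutelyContinuousOnInterval f' a b :=
    (hg.absolutelyContinuousOnInterval_intervalIntegral left_mem_uIcc).of_dist_le
      (by rwa [uIcc_of_le hab])
  have hparts := intervalIntegral.integral_inner_deriv_eq_sub (u' := u') hab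
    (fun t ht ↦ (hf t ht).regWeight_smul hδ) hu' hv
  simp only [real_inner_smul_left, mul_comm (regWeight θ δ (f _))] at hparts
  have hmain : (1 - θ) * ∫ t in a..b, ‖f' t‖ ^ 2 * regWeight θ δ (f t) ≤
      ∫ t in a..b, ⟪u' t, f' t⟫_ℝ := by
    rw [← intervalIntegral.integral_const_mul]
    refine intervalIntegral.integral_mono_on hab ?_ ?_
      fun t _ ↦ one_sub_mul_le_inner_deriv_regWeight_smul hθ₀ hδ (f t) (f' t)
    · exact (continuousOn_const.mul ((hf'.norm.pow 2).mul (hfc.regWeight hδ)))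
        |>.intervalIntegrable_of_Icc hab
    · exact (hu'.inner hf').intervalIntegrable_of_Icc hab
  have hrem : |∫ t in a..b, ⟪f t, deriv f' t⟫_ℝ * regWeight θ δ (f t)| ≤
      M ^ (1 - θ) * ∫ t in a..b, |g t| := by
    rw [← intervalIntegral.integral_const_mul, ← Real.norm_eq_abs]
    refine intervalIntegral.norm_integral_le_of_norm_le hab ?_ (hg.abs.const_mul _)
    filter_upwards [ae_norm_deriv_le_of_dist_le hg hf'g] with t hderiv ht
    have hfM : ‖regWeight θ δ (f t) • f t‖ ≤ M ^ (1 - θ) :=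
      (norm_regWeight_smul_le hθ₀ hθ₁ hδ (f t)).trans
        (Real.rpow_le_rpow (norm_nonneg _) (hM t (Ioc_subset_Icc_self ht)) (by linarith))
    rw [mul_comm, ← real_inner_smul_left]
    calc _ ≤ ‖regWeight θ δ (f t) • f t‖ * ‖deriv f' t‖ := norm_inner_le_norm _ _
      _ ≤ M ^ (1 - θ) * |g t| :=
        mul_le_mul hfM (hderiv ht) (norm_nonneg _) ((norm_nonneg _).trans hfM)
  linarith [neg_le_abs (∫ t in a..b, ⟪f t, deriv f' t⟫_ℝ * regWeight θ δ (f t))]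

theorem lintegral_norm_sq_mul_rpow_le (hab : a ≤ b) (hθ₀ : 0 ≤ θ) (hθ₁ : θ < 1)
    (hf : ∀ t ∈ Icc a b, HasDerivAt f (f' t) t) (hf' : ContinuousOn f' (Icc a b))
    (hf'' : ∀ s ∈ Icc a b, ∀ t ∈ Icc a b, f' t - f' s = ∫ x in s..t, f'' x)
    (hf''int : IntervalIntegrable (fun t ↦ ‖f'' t‖) volume a b)
    (hM : ∀ t ∈ Icc a b, ‖f t‖ ≤ M) (hne : ∀ᵐ t ∂volume.restrict (Ioc a b), f t ≠ 0) :
    ∫⁻ t in Ioc a b, ENNReal.ofReal (‖f' t‖ ^ 2 * ‖f t‖ ^ (-θ)) ≤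
      ENNReal.ofReal (M ^ (1 - θ) / (1 - θ) * (∫ t in a..b, ‖f'' t‖) +
        (boundaryTerm θ (f b) (f' b) - boundaryTerm θ (f a) (f' a))) := by
  have hfc : ContinuousOn f (Icc a b) := fun t ht ↦ (hf t ht).continuousAt.continuousWithinAt
  have hdist : ∀ s ∈ Icc a b, ∀ t ∈ Icc a b,
      dist (f' s) (f' t) ≤ dist (∫ x in a..s, ‖f'' x‖) (∫ x in a..t, ‖f'' x‖) := by
    intro s hs t ht
    have hsub : ∀ r ∈ Icc a b, uIcc a r ⊆ uIcc a b := fun r hr ↦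
      uIcc_subset_uIcc left_mem_uIcc (Icc_subset_uIcc hr)
    rw [dist_eq_norm, Real.dist_eq, hf'' t ht s hs, intervalIntegral.integral_interval_sub_left
      (hf''int.mono_set (hsub s hs)) (hf''int.mono_set (hsub t ht))]
    exact intervalIntegral.norm_integral_le_abs_integral_norm
  set δ : ℕ → ℝ := fun n ↦ 1 / (n + 1)
  have hδ : ∀ n, 0 < δ n := fun n ↦ Nat.one_div_pos_of_nat
  have hδ0 : Tendsto δ atTop (𝓝 0) := tendsto_one_div_add_atTop_nhds_zero_nat
  have hcont : ∀ n, ContinuousOn (fun t ↦ ‖f' t‖ ^ 2 * regWeight θ (δ n) (f t)) (Icc a b) :=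
    fun n ↦ (hf'.norm.pow 2).mul (hfc.regWeight (hδ n))
  have hmono : Tendsto
      (fun n ↦ ∫⁻ t in Ioc a b, ENNReal.ofReal (‖f' t‖ ^ 2 * regWeight θ (δ n) (f t))) atTop
      (𝓝 (∫⁻ t in Ioc a b, ENNReal.ofReal (‖f' t‖ ^ 2 * ‖f t‖ ^ (-θ)))) := by
    refine lintegral_tendsto_of_tendsto_of_monotone (fun n ↦ ?_)
      (ae_of_all _ fun t m n hmn ↦ ?_) ?_
    · exact (((hcont n).mono Ioc_subset_Icc_self).aemeasurable measurableSet_Ioc).ennreal_ofReal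
    · refine ENNReal.ofReal_le_ofReal (mul_le_mul_of_nonneg_left ?_ (sq_nonneg _))
      exact regWeight_anti hθ₀ (add_pos_of_nonneg_of_pos (sq_nonneg _) (hδ n))
        (Nat.one_div_le_one_div hmn)
    · filter_upwards [hne] with t ht
      exact ENNReal.tendsto_ofReal (((tendsto_regWeight ht).comp hδ0).const_mul _)
  have hbound : ∀ n, ∫⁻ t in Ioc a b, ENNReal.ofReal (‖f' t‖ ^ 2 * regWeight θ (δ n) (f t)) ≤
      ENNReal.ofReal ((M ^ (1 - θ) * (∫ t in a..b, ‖f'' t‖) +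
        (⟪f b, f' b⟫_ℝ * regWeight θ (δ n) (f b) - ⟪f a, f' a⟫_ℝ * regWeight θ (δ n) (f a))) /
          (1 - θ)) := by
    intro n
    rw [← ofReal_integral_eq_lintegral_ofReal
      ((hcont n).integrableOn_Icc.mono_set Ioc_subset_Icc_self)
      (ae_of_all _ fun t ↦ mul_nonneg (sq_nonneg _) (regWeight_nonneg (hδ n).le _))]
    refine ENNReal.ofReal_le_ofReal ?_
    rw [le_div_iff₀' (by linarith), ← intervalIntegral.integral_of_le hab]
    simpa using
      one_sub_mul_integral_norm_sq_mul_regWeight_le hab hθ₀ hθ₁ (hδ n) hf hf' hf''int hdist hM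
  have hlim : Tendsto (fun n ↦ (M ^ (1 - θ) * (∫ t in a..b, ‖f'' t‖) +
      (⟪f b, f' b⟫_ℝ * regWeight θ (δ n) (f b) - ⟪f a, f' a⟫_ℝ * regWeight θ (δ n) (f a))) /
        (1 - θ)) atTop (𝓝 (M ^ (1 - θ) / (1 - θ) * (∫ t in a..b, ‖f'' t‖) +
          (boundaryTerm θ (f b) (f' b) - boundaryTerm θ (f a) (f' a)))) := by
    have := ((((tendsto_inner_mul_regWeight (θ := θ) (f b) (f' b)).comp hδ0).sub
      ((tendsto_inner_mul_regWeight (θ := θ) (f a) (f' a)).comp hδ0)).const_add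
        (M ^ (1 - θ) * ∫ t in a..b, ‖f'' t‖)).div_const (1 - θ)
    convert this using 2
    · rfl
    · simp only [boundaryTerm]
      ring
  exact le_of_tendsto_of_tendsto' hmono (ENNReal.tendsto_ofReal hlim) hbound

theorem lintegral_norm_sq_mul_rpow_le_of_Icc_subset_Ioo (hsub : Icc a b ⊆ Ioo 0 T) (hab : a ≤ b)
    (hθ₀ : 0 ≤ θ) (hθ₁ : θ < 1) (hf : ∀ t ∈ Icc 0 T, HasDerivAt f (f' t) t)
    (hf' : ContinuousOn f' (Icc 0 T))
    (hf'' : ∀ s ∈ Ioo 0 T, ∀ t ∈ Ioo 0 T, f' t - f' s = ∫ x in s..t, f'' x)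
    (hf''int : IntegrableOn (fun t ↦ ‖f'' t‖) (Ioc 0 T)) (hM : ∀ t ∈ Icc 0 T, ‖f t‖ ≤ M)
    (hne : ∀ᵐ t ∂volume.restrict (Icc 0 T), f t ≠ 0) :
    ∫⁻ t in Ioc a b, ENNReal.ofReal (‖f' t‖ ^ 2 * ‖f t‖ ^ (-θ)) ≤
      ENNReal.ofReal (M ^ (1 - θ) / (1 - θ) * (∫ t in Ioc 0 T, ‖f'' t‖) +
        (boundaryTerm θ (f b) (f' b) - boundaryTerm θ (f a) (f' a))) := by
  have hsub' : Icc a b ⊆ Icc 0 T := hsub.trans Ioo_subset_Icc_self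
  have hIoc : Ioc a b ⊆ Ioc 0 T :=
    Ioc_subset_Ioc (hsub (left_mem_Icc.2 hab)).1.le (hsub (right_mem_Icc.2 hab)).2.le
  refine (lintegral_norm_sq_mul_rpow_le hab hθ₀ hθ₁ (fun t ht ↦ hf t (hsub' ht))
    (hf'.mono hsub') (fun s hs t ht ↦ hf'' s (hsub hs) t (hsub ht))
    ((intervalIntegrable_iff_integrableOn_Ioc_of_le hab).2 (hf''int.mono_set hIoc))
    (fun t ht ↦ hM t (hsub' ht))
    (ae_restrict_of_ae_restrict_of_subset (Ioc_subset_Icc_self.trans hsub') hne)).trans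
    (ENNReal.ofReal_le_ofReal ?_)
  have hM₀ : 0 ≤ M := (norm_nonneg _).trans (hM a (hsub' (left_mem_Icc.2 hab)))
  have hC : 0 ≤ M ^ (1 - θ) / (1 - θ) := div_nonneg (Real.rpow_nonneg hM₀ _) (by linarith)
  gcongr
  rw [intervalIntegral.integral_of_le hab]
  exact setIntegral_mono_set hf''int (ae_of_all _ fun t ↦ norm_nonneg _) hIoc.eventuallyLE

end Energy

theorem stmt_0_general
    (d : ℕ) (T θ : ℝ) (hT : 0 < T) (hθ₀ : 0 < θ) (hθ₁ : θ < 1)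
    (f f' f'' : ℝ → EuclideanSpace ℝ (Fin d))
    -- `f` is C¹ on `[0,T]` with derivative `f'`
    (hderiv : ∀ t ∈ Icc (0 : ℝ) T, HasDerivAt f (f' t) t)
    (hf'cont : ContinuousOn f' (Icc (0 : ℝ) T))
    -- `f` is locally `W^{2,1}` on `(0,T)` with weak second derivative `f''`
    (hf''loc : ∀ s ∈ Ioo (0 : ℝ) T, ∀ t ∈ Ioo (0 : ℝ) T,
      f' t - f' s = ∫ u in s..t, f'' u)
    -- nontrivial case: `f''` is integrable on `[0,T]` (otherwise the inequality is trivial)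
    (hf''int : IntegrableOn (fun t => ‖f'' t‖) (Ioc (0 : ℝ) T))
    -- `f ≠ 0` almost everywhere
    (hne : ∀ᵐ t ∂(volume.restrict (Icc (0 : ℝ) T)), f t ≠ 0) :
    ∃ C₂ > (0 : ℝ),
      ∫⁻ t in Ioc (0 : ℝ) T, ENNReal.ofReal (‖f' t‖ ^ 2 * ‖f t‖ ^ (-θ)) ≤
        ENNReal.ofReal
          (C₂ * (∫ t in Ioc (0 : ℝ) T, ‖f'' t‖) +
            ((if f T = 0 then 0 else
                ((inner ℝ (f T) (f' T) : ℝ) / ‖f T‖) * (‖f T‖ ^ (1 - θ) / (1 - θ))) -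
             (if f 0 = 0 then 0 else
                ((inner ℝ (f 0) (f' 0) : ℝ) / ‖f 0‖) * (‖f 0‖ ^ (1 - θ) / (1 - θ))))) := by
  have hfc : ContinuousOn f (Icc 0 T) := fun t ht ↦ (hderiv t ht).continuousAt.continuousWithinAt
  obtain ⟨M, hM⟩ := isCompact_Icc.exists_bound_of_continuousOn hfc
  refine ⟨max M 1 ^ (1 - θ) / (1 - θ), div_pos (by positivity) (by linarith), ?_⟩
  have hR : ContinuousOn (fun t ↦ boundaryTerm θ (f t) (f' t)) (Icc 0 T) :=
    (continuous_boundaryTerm hθ₁).comp_continuousOn (hfc.prodMk hf'cont)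
  rw [ite_eq_boundaryTerm, ite_eq_boundaryTerm, ← setLIntegral_congr Ioo_ae_eq_Ioc,
    ← withDensity_apply _ measurableSet_Ioo]
  refine Measure.measure_Ioo_le_of_tendsto
    (ENNReal.tendsto_ofReal ((hR.tendsto_sub_endpoints hT).const_add _)) ?_
  filter_upwards [Ioo_mem_nhdsGT (half_pos hT)] with ε hε
  rw [withDensity_apply _ measurableSet_Ioc]
  exact lintegral_norm_sq_mul_rpow_le_of_Icc_subset_Ioo
    (Icc_subset_Ioo (by linarith [hε.1]) (by linarith [hε.1])) (by linarith [hε.2]) hθ₀.le hθ₁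
    hderiv hf'cont hf''loc hf''int
    (fun t ht ↦ (hM t ht).trans (le_max_left M 1)) hne

/-- Interpolation inequality (Lemma 4.1): for `f : [0,T] → ℝ^d` which is `C¹` on `[0,T]`
and locally `W^{2,1}` on `(0,T)` (weak second derivative `f''`), nonzero a.e., with
`h(λ) = λ^{-θ}`, `0 < θ < 1`, and `∫_ε^{T-ε} h(|f|) < ∞` for all `ε > 0`, there is
`C₂ > 0` with `∫_0^T |f'|² h(|f|) ≤ C₂ ∫_0^T |f''| + R(f,T) - R(f,0)`. -/
theorem stmt_0
    (d : ℕ) (T θ : ℝ) (hT : 0 < T) (hθ₀ : 0 < θ) (hθ₁ : θ < 1)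
    (f f' f'' : ℝ → EuclideanSpace ℝ (Fin d))
    -- `f` is C¹ on `[0,T]` with derivative `f'`
    (hderiv : ∀ t ∈ Icc (0 : ℝ) T, HasDerivAt f (f' t) t)
    (hf'cont : ContinuousOn f' (Icc (0 : ℝ) T))
    -- `f` is locally `W^{2,1}` on `(0,T)` with weak second derivative `f''`
    (hf''loc : ∀ s ∈ Ioo (0 : ℝ) T, ∀ t ∈ Ioo (0 : ℝ) T,
      f' t - f' s = ∫ u in s..t, f'' u)
    -- nontrivial case: `f''` is integrable on `[0,T]` (otherwise the inequality is trivial)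
    (hf''int : IntegrableOn (fun t => ‖f'' t‖) (Ioc (0 : ℝ) T))
    -- `f ≠ 0` almost everywhere
    (hne : ∀ᵐ t ∂(volume.restrict (Icc (0 : ℝ) T)), f t ≠ 0)
    -- assumption (4.2): `∫_ε^{T-ε} h(|f|) dt < ∞` for all `ε > 0`
    (hint : ∀ ε > (0 : ℝ), IntegrableOn (fun t => ‖f t‖ ^ (-θ)) (Icc ε (T - ε))) :
    ∃ C₂ > (0 : ℝ),
      ∫⁻ t in Ioc (0 : ℝ) T, ENNReal.ofReal (‖f' t‖ ^ 2 * ‖f t‖ ^ (-θ)) ≤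
        ENNReal.ofReal
          (C₂ * (∫ t in Ioc (0 : ℝ) T, ‖f'' t‖) +
            ((if f T = 0 then 0 else
                ((inner ℝ (f T) (f' T) : ℝ) / ‖f T‖) * (‖f T‖ ^ (1 - θ) / (1 - θ))) -
             (if f 0 = 0 then 0 else
                ((inner ℝ (f 0) (f' 0) : ℝ) / ‖f 0‖) * (‖f 0‖ ^ (1 - θ) / (1 - θ))))) :=
  stmt_0_general d T θ hT hθ₀ hθ₁ f f' f'' hderiv hf'cont hf''loc hf''int hne
end

section
/- Let x_i, x_j : [s₁,s₂] → ℝ^d be C¹ functions with derivatives v_i = x_i', v_j = x_j', such that there is no time t in [s₁,s₂] with x_i(t) = x_j(t) and v_i(t) = v_j(t) simultaneously, and such that the set of times t where x_i(t) = x_j(t) is finite. Then for every θ ∈ (0,1), ∫_{s₁}^{s₂} |x_j(t) − x_i(t)|^{-θ} dt < ∞. -/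
/-! Where the relative position `f = x_j - x_i` vanishes, its derivative does not, so
`‖f t‖ ≥ c |t - t₀|` near `t₀` and `‖f‖ ^ (-θ)` is dominated by the integrable `|t - t₀| ^ (-θ)`;
elsewhere `‖f‖ ^ (-θ)` is continuous. Local integrability on the compact interval then suffices. -/

open MeasureTheory Set Filter Topology Asymptotics

theorem intervalIntegrable_abs_rpow {r : ℝ} (hr : -1 < r) (a b : ℝ) :
    IntervalIntegrable (fun x : ℝ => |x| ^ r) volume a b := by
  have hpos : ∀ c, 0 ≤ c → IntervalIntegrable (fun x : ℝ => |x| ^ r) volume 0 c := fun c hc =>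
    (intervalIntegral.intervalIntegrable_rpow' hr).congr fun x hx => by
      rw [uIoc_of_le hc] at hx
      simp [abs_of_pos hx.1]
  have hall : ∀ c, IntervalIntegrable (fun x : ℝ => |x| ^ r) volume 0 c := by
    intro c
    rcases le_total 0 c with hc | hc
    · exact hpos c hc
    · rw [IntervalIntegrable.iff_comp_neg]
      simpa using hpos (-c) (by linarith)
  exact (hall a).symm.trans (hall b)

theorem integrableAtFilter_abs_sub_rpow {r : ℝ} (hr : -1 < r) (x : ℝ) :
    IntegrableAtFilter (fun t : ℝ => |t - x| ^ r) (𝓝 x) := by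
  refine ⟨Icc (x - 1) (x + 1), Icc_mem_nhds (by linarith) (by linarith), ?_⟩
  have := (intervalIntegrable_abs_rpow hr (-1) 1).comp_sub_right x
  rw [intervalIntegrable_iff_integrableOn_Icc_of_le (by linarith)] at this
  simpa [sub_eq_add_neg, add_comm] using this

section
variable {E : Type*} [NormedAddCommGroup E] [NormedSpace ℝ E]

theorem HasDerivAt.isBigO_sub_of_apply_eq_zero {f : ℝ → E} {f' : E} {x : ℝ}
    (hf : HasDerivAt f f' x) (hfx : f x = 0) (hf' : f' ≠ 0) :
    (· - x) =O[𝓝 x] f := by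
  have := (HasDerivAtFilter.isTheta_sub hf hf').isBigO_symm.comp_tendsto
    (tendsto_id.prodMk tendsto_const_pure)
  simpa [Function.comp_def, hfx] using this

theorem Asymptotics.IsBigO.norm_rpow_neg {α F G : Type*} [NormedAddCommGroup F]
    [NormedAddCommGroup G] {u : α → F} {v : α → G} {l : Filter α} {θ : ℝ} (hθ : 0 ≤ θ)
    (h : u =O[l] v) (hzero : ∀ᶠ t in l, u t = 0 → v t = 0) :
    (fun t => ‖v t‖ ^ (-θ)) =O[l] (fun t => ‖u t‖ ^ (-θ)) := by
  obtain ⟨c, hc, hcuv⟩ := h.exists_pos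
  refine IsBigO.of_bound (c ^ θ) ?_
  filter_upwards [hcuv.bound, hzero] with t huv hz
  rw [Real.norm_of_nonneg (by positivity), Real.norm_of_nonneg (by positivity)]
  rcases eq_or_ne (u t) 0 with hu | hu
  -- `0 ^ (-θ)` is `0` for `θ > 0`, which is why `v` has to vanish wherever `u` does.
  · rw [hu, hz hu, norm_zero]
    rcases hθ.eq_or_lt with rfl | hθ
    · simp
    · simp [Real.zero_rpow (neg_ne_zero.2 hθ.ne')]
  · have hu' : 0 < ‖u t‖ / c := by positivity
    calc ‖v t‖ ^ (-θ) ≤ (‖u t‖ / c) ^ (-θ) :=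
          Real.rpow_le_rpow_of_nonpos hu' (by rwa [div_le_iff₀' hc]) (by linarith)
      _ = c ^ θ * ‖u t‖ ^ (-θ) := by
          rw [Real.div_rpow (norm_nonneg _) hc.le, Real.rpow_neg hc.le, div_inv_eq_mul, mul_comm]

theorem HasDerivAt.integrableAtFilter_norm_rpow_neg {f : ℝ → E} {f' : E} {x θ : ℝ}
    {l : Filter ℝ} [IsMeasurablyGenerated l] (hf : HasDerivAt f f' x) (hne : f x ≠ 0 ∨ f' ≠ 0)
    (hθ₀ : 0 ≤ θ) (hθ₁ : θ < 1) (hl : l ≤ 𝓝 x)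
    (hm : StronglyMeasurableAtFilter (fun t => ‖f t‖ ^ (-θ)) l) :
    IntegrableAtFilter (fun t => ‖f t‖ ^ (-θ)) l := by
  by_cases hfx : f x = 0
  · have hsub := hf.isBigO_sub_of_apply_eq_zero hfx (hne.resolve_left (not_not.2 hfx))
    have hbig := hsub.norm_rpow_neg hθ₀ (Eventually.of_forall fun t ht => by
      rwa [sub_eq_zero.1 ht])
    simp only [Real.norm_eq_abs] at hbig
    exact (hbig.mono hl).integrableAtFilter hm
      ((integrableAtFilter_abs_sub_rpow (by linarith) x).filter_mono hl)
  · exact ((hf.continuousAt.norm.rpow_const (Or.inl (norm_ne_zero_iff.2 hfx))).tendsto.mono_left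
      hl).integrableAtFilter hm ((volume.finiteAt_nhds x).filter_mono hl)

theorem integrableOn_norm_rpow_neg_of_hasDerivAt {f f' : ℝ → E} {s : Set ℝ} {θ : ℝ}
    (hs : IsCompact s) (hθ₀ : 0 ≤ θ) (hθ₁ : θ < 1) (hf : ∀ t ∈ s, HasDerivAt f (f' t) t)
    (hne : ∀ t ∈ s, f t ≠ 0 ∨ f' t ≠ 0) :
    IntegrableOn (fun t => ‖f t‖ ^ (-θ)) s := by
  have hcont : ContinuousOn (fun t => ‖f t‖) s :=
    fun t ht => (hf t ht).continuousAt.continuousWithinAt.norm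
  have hm : AEStronglyMeasurable (fun t => ‖f t‖ ^ (-θ)) (volume.restrict s) :=
    ((hcont.aemeasurable hs.measurableSet).pow_const _).aestronglyMeasurable
  refine LocallyIntegrableOn.integrableOn_isCompact (fun x hx => ?_) hs
  have := hs.measurableSet.nhdsWithin_isMeasurablyGenerated x
  exact (hf x hx).integrableAtFilter_norm_rpow_neg (hne x hx) hθ₀ hθ₁ nhdsWithin_le_nhds
    ⟨s, self_mem_nhdsWithin, hm⟩

end

theorem stmt_5_general
    (d : ℕ) (s₁ s₂ : ℝ)
    (xi xj vi vj : ℝ → EuclideanSpace ℝ (Fin d))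
    (hxi : ∀ t ∈ Icc s₁ s₂, HasDerivAt xi (vi t) t)
    (hxj : ∀ t ∈ Icc s₁ s₂, HasDerivAt xj (vj t) t)
    -- no sticking on `[s₁,s₂]`
    (hnostick : ∀ t ∈ Icc s₁ s₂, ¬(xi t = xj t ∧ vi t = vj t)) :
    ∀ θ ∈ Ioo (0 : ℝ) 1,
      IntegrableOn (fun t => ‖xj t - xi t‖ ^ (-θ)) (Icc s₁ s₂) := by
  rintro θ ⟨hθ₀, hθ₁⟩
  refine integrableOn_norm_rpow_neg_of_hasDerivAt (f' := fun t => vj t - vi t) isCompact_Icc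
    hθ₀.le hθ₁ (fun t ht => (hxj t ht).sub (hxi t ht)) fun t ht => ?_
  by_contra! h
  exact hnostick t ht ⟨(sub_eq_zero.1 h.1).symm, (sub_eq_zero.1 h.2).symm⟩

/-- Lemma 3.3: if two `C¹` trajectories never stick on `[s₁,s₂]` (no time with equal
positions and equal velocities) and collide only finitely many times, then
`∫_{s₁}^{s₂} |x_j − x_i|^{−θ} dt < ∞` for every `θ ∈ (0,1)`. -/
theorem stmt_5
    (d : ℕ) (s₁ s₂ : ℝ) (hs : s₁ < s₂)
    (xi xj vi vj : ℝ → EuclideanSpace ℝ (Fin d))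
    (hxi : ∀ t ∈ Icc s₁ s₂, HasDerivAt xi (vi t) t)
    (hxj : ∀ t ∈ Icc s₁ s₂, HasDerivAt xj (vj t) t)
    (hvi : ContinuousOn vi (Icc s₁ s₂))
    (hvj : ContinuousOn vj (Icc s₁ s₂))
    -- no sticking on `[s₁,s₂]`
    (hnostick : ∀ t ∈ Icc s₁ s₂, ¬(xi t = xj t ∧ vi t = vj t))
    -- finitely many collisions
    (hfin : {t ∈ Icc s₁ s₂ | xi t = xj t}.Finite) :
    ∀ θ ∈ Ioo (0 : ℝ) 1,
      IntegrableOn (fun t => ‖xj t - xi t‖ ^ (-θ)) (Icc s₁ s₂) :=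
  stmt_5_general d s₁ s₂ xi xj vi vj hxi hxj hnostick
end

section
/- Let v_i, v_j : [t₀, t₀+δ] → ℝ^d be continuous with v_j(t) − v_i(t) ∈ B(w, ρ) for all t in [t₀, t₀+δ], where w ∈ ℝ^d, ρ > 0, and 0 ∉ B(w, ρ) (the closed ball of radius ρ around w). Suppose x_i, x_j are C¹ with x_i' = v_i, x_j' = v_j and x_i(t₀) = x_j(t₀). Then there is c > 0 with |x_j(t) − x_i(t)| ≥ c (t − t₀) for all t ∈ [t₀, t₀+δ], and consequently ∫_{t₀}^{t₀+δ} |x_j(t) − x_i(t)|^{-θ} dt < ∞ for every θ ∈ (0,1). -/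
/-!
Pairing with `w` turns the vector-valued separation `y = x_j - x_i` into the scalar `⟪w, y⟫`,
whose derivative `⟪w, v_j - v_i⟫` is at least `‖w‖ (‖w‖ - ρ)` because `v_j - v_i` stays in
`B(w, ρ)`. Since `⟪w, y⟫ ≤ ‖w‖ ‖y‖`, the separation grows at least linearly with slope
`‖w‖ - ρ > 0`, so `‖y‖^(-θ)` is dominated by a multiple of `(t - t₀)^(-θ)`, which is integrable
for `θ < 1`.
-/

open MeasureTheory Set Metric

open scoped RealInnerProductSpace

section InnerProductSpace

variable {E : Type*} [NormedAddCommGroup E] [InnerProductSpace ℝ E]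

theorem norm_mul_sub_le_inner_of_mem_closedBall {w ξ : E} {ρ : ℝ} (hξ : ξ ∈ closedBall w ρ) :
    ‖w‖ * (‖w‖ - ρ) ≤ ⟪w, ξ⟫ := by
  have hdist : ‖ξ - w‖ ≤ ρ := by rwa [mem_closedBall, dist_eq_norm] at hξ
  calc ‖w‖ * (‖w‖ - ρ) ≤ ‖w‖ * (‖w‖ - ‖ξ - w‖) := by gcongr
    _ = ⟪w, w⟫ - ‖w‖ * ‖ξ - w‖ := by rw [real_inner_self_eq_norm_sq]; ring
    _ ≤ ⟪w, w⟫ + ⟪w, ξ - w⟫ := by linarith [neg_le_of_abs_le (abs_real_inner_le_norm w (ξ - w))]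
    _ = ⟪w, ξ⟫ := by rw [← inner_add_right, add_sub_cancel]

theorem mul_sub_le_norm_of_hasDerivAt_mem_closedBall {y y' : ℝ → E} {w : E} {ρ a b t : ℝ}
    (hw : ρ < ‖w‖) (hy : ∀ s ∈ Icc a b, HasDerivAt y (y' s) s)
    (hy' : ∀ s ∈ Icc a b, y' s ∈ closedBall w ρ) (ha : y a = 0) (ht : t ∈ Icc a b) :
    (‖w‖ - ρ) * (t - a) ≤ ‖y t‖ := by
  have hρ : 0 ≤ ρ := nonempty_closedBall.mp ⟨_, hy' a ⟨le_rfl, ht.1.trans ht.2⟩⟩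
  have hw₀ : 0 < ‖w‖ := hρ.trans_lt hw
  have hg : ∀ s ∈ Icc a b, HasDerivAt (fun s ↦ ⟪w, y s⟫) ⟪w, y' s⟫ s := fun s hs ↦ by
    simpa using (hasDerivAt_const s w).inner ℝ (hy s hs)
  have hgrowth : ‖w‖ * (‖w‖ - ρ) * (t - a) ≤ ⟪w, y t⟫ - ⟪w, y a⟫ :=
    (convex_Icc a b).mul_sub_le_image_sub_of_le_deriv
      (fun s hs ↦ (hg s hs).continuousAt.continuousWithinAt)
      (fun s hs ↦ (hg s (interior_subset hs)).differentiableAt.differentiableWithinAt)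
      (fun s hs ↦ (hg s (interior_subset hs)).deriv ▸
        norm_mul_sub_le_inner_of_mem_closedBall (hy' s (interior_subset hs)))
      a ⟨le_rfl, ht.1.trans ht.2⟩ t ht ht.1
  rw [ha, inner_zero_right, sub_zero, mul_assoc] at hgrowth
  exact le_of_mul_le_mul_left (hgrowth.trans (real_inner_le_norm w (y t))) hw₀

end InnerProductSpace

theorem integrableOn_Ioc_sub_rpow {a b r : ℝ} (hr : -1 < r) :
    IntegrableOn (fun t ↦ (t - a) ^ r) (Ioc a b) := by
  have h := (intervalIntegral.intervalIntegrable_rpow' (a := 0) (b := b - a) hr).comp_sub_right a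
  rw [zero_add, sub_add_cancel] at h
  exact h.def'.mono_set Ioc_subset_uIoc

theorem integrableOn_Ioc_rpow_neg_of_mul_sub_le {f : ℝ → ℝ} {a b c θ : ℝ}
    (hf : ContinuousOn f (Ioc a b)) (hc : 0 < c) (hθ₀ : 0 ≤ θ) (hθ₁ : θ < 1)
    (hbound : ∀ t ∈ Ioc a b, c * (t - a) ≤ f t) :
    IntegrableOn (fun t ↦ f t ^ (-θ)) (Ioc a b) := by
  have hlower_pos : ∀ t ∈ Ioc a b, 0 < c * (t - a) := fun t ht ↦ mul_pos hc (sub_pos.mpr ht.1)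
  have hmeas : AEStronglyMeasurable (fun t ↦ f t ^ (-θ)) (volume.restrict (Ioc a b)) :=
    (hf.rpow_const fun t ht ↦ .inl ((hlower_pos t ht).trans_le (hbound t ht)).ne')
      |>.aestronglyMeasurable measurableSet_Ioc
  refine ((integrableOn_Ioc_sub_rpow (r := -θ) (by linarith)).const_mul (c ^ (-θ))).mono' hmeas ?_
  refine (ae_restrict_iff' measurableSet_Ioc).mpr (Filter.Eventually.of_forall fun t ht ↦ ?_)
  have hft : 0 < f t := (hlower_pos t ht).trans_le (hbound t ht)
  rw [Real.norm_of_nonneg (Real.rpow_nonneg hft.le _), ← Real.mul_rpow hc.le (sub_pos.mpr ht.1).le]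
  exact Real.rpow_le_rpow_of_nonpos (hlower_pos t ht) (hbound t ht) (by linarith)

theorem stmt_6_general
    (d : ℕ) (t₀ δ : ℝ)
    (xi xj vi vj : ℝ → EuclideanSpace ℝ (Fin d))
    (w : EuclideanSpace ℝ (Fin d)) (ρ : ℝ)
    (h0 : (0 : EuclideanSpace ℝ (Fin d)) ∉ Metric.closedBall w ρ)
    (hball : ∀ t ∈ Icc t₀ (t₀ + δ), vj t - vi t ∈ Metric.closedBall w ρ)
    (hxi : ∀ t ∈ Icc t₀ (t₀ + δ), HasDerivAt xi (vi t) t)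
    (hxj : ∀ t ∈ Icc t₀ (t₀ + δ), HasDerivAt xj (vj t) t)
    (hx0 : xi t₀ = xj t₀) :
    (∃ c > (0 : ℝ), ∀ t ∈ Icc t₀ (t₀ + δ), c * (t - t₀) ≤ ‖xj t - xi t‖) ∧
    ∀ θ ∈ Ioo (0 : ℝ) 1,
      IntegrableOn (fun t => ‖xj t - xi t‖ ^ (-θ)) (Icc t₀ (t₀ + δ)) := by
  have hw : ρ < ‖w‖ := by simpa [dist_eq_norm] using h0
  have hderiv : ∀ t ∈ Icc t₀ (t₀ + δ), HasDerivAt (fun t ↦ xj t - xi t) (vj t - vi t) t :=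
    fun t ht ↦ (hxj t ht).sub (hxi t ht)
  have hgrowth : ∀ t ∈ Icc t₀ (t₀ + δ), (‖w‖ - ρ) * (t - t₀) ≤ ‖xj t - xi t‖ :=
    fun _ ↦ mul_sub_le_norm_of_hasDerivAt_mem_closedBall (y := fun t ↦ xj t - xi t) hw hderiv hball
      (sub_eq_zero.mpr hx0.symm)
  refine ⟨⟨‖w‖ - ρ, sub_pos.mpr hw, hgrowth⟩, fun θ hθ ↦ ?_⟩
  have hcont : ContinuousOn (fun t ↦ ‖xj t - xi t‖) (Ioc t₀ (t₀ + δ)) :=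
    fun t ht ↦ (hderiv t (Ioc_subset_Icc_self ht)).continuousAt.norm.continuousWithinAt
  rw [integrableOn_Icc_iff_integrableOn_Ioc]
  exact integrableOn_Ioc_rpow_neg_of_mul_sub_le hcont (sub_pos.mpr hw) hθ.1.le hθ.2
    fun t ht ↦ hgrowth t (Ioc_subset_Icc_self ht)

/-- If `v_j − v_i` stays in a closed ball `B(w,ρ)` not containing `0` on `[t₀, t₀+δ]` and
`x_i(t₀) = x_j(t₀)`, then `|x_j(t) − x_i(t)| ≥ c (t − t₀)` for some `c > 0`, and hence
`∫_{t₀}^{t₀+δ} |x_j − x_i|^{−θ} dt < ∞` for every `θ ∈ (0,1)`. -/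
theorem stmt_6
    (d : ℕ) (t₀ δ : ℝ) (hδ : 0 < δ)
    (xi xj vi vj : ℝ → EuclideanSpace ℝ (Fin d))
    (w : EuclideanSpace ℝ (Fin d)) (ρ : ℝ) (hρ : 0 < ρ)
    (h0 : (0 : EuclideanSpace ℝ (Fin d)) ∉ Metric.closedBall w ρ)
    (hvi : ContinuousOn vi (Icc t₀ (t₀ + δ)))
    (hvj : ContinuousOn vj (Icc t₀ (t₀ + δ)))
    (hball : ∀ t ∈ Icc t₀ (t₀ + δ), vj t - vi t ∈ Metric.closedBall w ρ)
    (hxi : ∀ t ∈ Icc t₀ (t₀ + δ), HasDerivAt xi (vi t) t)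
    (hxj : ∀ t ∈ Icc t₀ (t₀ + δ), HasDerivAt xj (vj t) t)
    (hx0 : xi t₀ = xj t₀) :
    (∃ c > (0 : ℝ), ∀ t ∈ Icc t₀ (t₀ + δ), c * (t - t₀) ≤ ‖xj t - xi t‖) ∧
    ∀ θ ∈ Ioo (0 : ℝ) 1,
      IntegrableOn (fun t => ‖xj t - xi t‖ ^ (-θ)) (Icc t₀ (t₀ + δ)) :=
  stmt_6_general d t₀ δ xi xj vi vj w ρ h0 hball hxi hxj hx0
end

section
/- Let v¹, v², with v^m = (v^m_1, …, v^m_N), be two velocity fields solving the Cucker–Smale velocity equation along given trajectories, and define r(t) = Σ_{i=1}^N |v_i¹(t) − v_i²(t)|². Then for a.e. t where both solutions are differentiable, dr/dt ≤ (1/N) Σ_{i,j=1}^N |(v_i¹−v_i²) − (v_j¹−v_j²)| · |v_j²−v_i²| · |ψ(|x_j¹−x_i¹|) − ψ(|x_j²−x_i²|)|; in particular the quadratic dissipative term −(1/N) Σ_{i,j} |(v_i¹−v_i²)−(v_j¹−v_j²)|² ψ(|x_j¹−x_i¹|) can be dropped since it is nonpositive. -/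
/-!
Writing `w = v¹ − v²`, each `w_i` moves with velocity `(1/N) Σ_j a_ij` where
`a_ij = ψ¹_ij (v¹_j − v¹_i) − ψ²_ij (v²_j − v²_i)` is antisymmetric in `(i, j)`, so
`r' = (2/N) Σ_{i,j} ⟪w_i, a_ij⟫ = (1/N) Σ_{i,j} ⟪w_i − w_j, a_ij⟫`. Splitting
`a_ij = −ψ¹_ij (w_i − w_j) + (ψ¹_ij − ψ²_ij)(v²_j − v²_i)`, the first part contributes
`−ψ¹_ij ‖w_i − w_j‖² ≤ 0` and the second is bounded by Cauchy–Schwarz.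
-/

open scoped RealInnerProductSpace

section

variable {ι E : Type*} [Fintype ι] [NormedAddCommGroup E] [InnerProductSpace ℝ E]

theorem two_mul_sum_inner_sum_of_antisymm (w : ι → E) (a : ι → ι → E)
    (ha : ∀ i j, a j i = -a i j) :
    2 * ∑ i, ⟪w i, ∑ j, a i j⟫ = ∑ i, ∑ j, ⟪w i - w j, a i j⟫ := by
  have hswap : ∑ i, ∑ j, ⟪w j, a i j⟫ = -∑ i, ∑ j, ⟪w i, a i j⟫ := by
    rw [Finset.sum_comm, ← Finset.sum_neg_distrib]
    refine Finset.sum_congr rfl fun i _ => ?_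
    rw [← Finset.sum_neg_distrib]
    exact Finset.sum_congr rfl fun j _ => by rw [ha, inner_neg_right]
  simp only [inner_sum, inner_sub_left, Finset.sum_sub_distrib, hswap]
  ring

theorem inner_sub_smul_sub_smul_le {c₁ : ℝ} (hc₁ : 0 ≤ c₁) (c₂ : ℝ) (p q : E) :
    ⟪q - p, c₁ • p - c₂ • q⟫ ≤ ‖q - p‖ * ‖q‖ * |c₁ - c₂| := by
  have hsplit : c₁ • p - c₂ • q = -(c₁ • (q - p)) + (c₁ - c₂) • q := by
    simp only [smul_sub, sub_smul]; abel
  have hcs : (c₁ - c₂) * ⟪q - p, q⟫ ≤ ‖q - p‖ * ‖q‖ * |c₁ - c₂| :=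
    calc (c₁ - c₂) * ⟪q - p, q⟫ ≤ |c₁ - c₂| * |⟪q - p, q⟫| := by
          rw [← abs_mul]; exact le_abs_self _
      _ ≤ |c₁ - c₂| * (‖q - p‖ * ‖q‖) := by gcongr; exact abs_real_inner_le_norm _ _
      _ = ‖q - p‖ * ‖q‖ * |c₁ - c₂| := mul_comm _ _
  rw [hsplit, inner_add_right, inner_neg_right, inner_smul_right, inner_smul_right,
    real_inner_self_eq_norm_sq]
  nlinarith [mul_nonneg hc₁ (sq_nonneg ‖q - p‖)]

end

theorem stmt_15_general
    (N d : ℕ)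
    (ψ : ℝ → ℝ) (hψ : ∀ s, 0 ≤ ψ s)
    (x₁ x₂ v₁ v₂ : ℝ → Fin N → EuclideanSpace ℝ (Fin d))
    (t : ℝ)
    (hv₁ : ∀ i, HasDerivAt (fun s => v₁ s i)
      ((N : ℝ)⁻¹ • ∑ j, ψ ‖x₁ t j - x₁ t i‖ • (v₁ t j - v₁ t i)) t)
    (hv₂ : ∀ i, HasDerivAt (fun s => v₂ s i)
      ((N : ℝ)⁻¹ • ∑ j, ψ ‖x₂ t j - x₂ t i‖ • (v₂ t j - v₂ t i)) t) :
    ∃ r' : ℝ,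
      HasDerivAt (fun s => ∑ i, ‖v₁ s i - v₂ s i‖ ^ 2) r' t ∧
      r' ≤ (N : ℝ)⁻¹ * ∑ i, ∑ j,
        ‖(v₁ t i - v₂ t i) - (v₁ t j - v₂ t j)‖ * ‖v₂ t j - v₂ t i‖ *
          |ψ ‖x₁ t j - x₁ t i‖ - ψ ‖x₂ t j - x₂ t i‖| := by
  set w := fun i => v₁ t i - v₂ t i
  set a := fun i j =>
    ψ ‖x₁ t j - x₁ t i‖ • (v₁ t j - v₁ t i) - ψ ‖x₂ t j - x₂ t i‖ • (v₂ t j - v₂ t i)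
  have ha : ∀ i j, a j i = -a i j := fun i j => by
    simp only [a, norm_sub_rev (x₁ t i), norm_sub_rev (x₂ t i)]; module
  have hw : ∀ i, HasDerivAt (fun s => v₁ s i - v₂ s i) ((N : ℝ)⁻¹ • ∑ j, a i j) t := fun i => by
    refine ((hv₁ i).fun_sub (hv₂ i)).congr_deriv ?_
    rw [← smul_sub, ← Finset.sum_sub_distrib]
  refine ⟨_, HasDerivAt.fun_sum fun i _ => (hw i).norm_sq, ?_⟩
  calc ∑ i, 2 * ⟪w i, (N : ℝ)⁻¹ • ∑ j, a i j⟫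
      = (N : ℝ)⁻¹ * (2 * ∑ i, ⟪w i, ∑ j, a i j⟫) := by
        simp only [inner_smul_right, Finset.mul_sum]; ring_nf
    _ = (N : ℝ)⁻¹ * ∑ i, ∑ j, ⟪w i - w j, a i j⟫ := by
        rw [two_mul_sum_inner_sum_of_antisymm w a ha]
    _ ≤ _ := by
      gcongr with i _ j _
      have hwij : w i - w j = (v₂ t j - v₂ t i) - (v₁ t j - v₁ t i) := by simp only [w]; abel
      rw [hwij]
      exact inner_sub_smul_sub_smul_le (hψ _) _ _ _

/-- Dissipation inequality for the difference of two solutions of the Cucker–Smale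
velocity equation: at a point `t` where both solutions are differentiable,
`r(t) = Σ_i |v_i¹ − v_i²|²` is differentiable and its derivative is bounded by
`(1/N) Σ_{i,j} |(v_i¹−v_i²)−(v_j¹−v_j²)| |v_j²−v_i²| |ψ(|x_j¹−x_i¹|) − ψ(|x_j²−x_i²|)|`
(the quadratic dissipative term being nonpositive can be dropped). -/
theorem stmt_15
    (N d : ℕ) (hN : 1 ≤ N)
    (ψ : ℝ → ℝ) (hψ : ∀ s, 0 ≤ ψ s)
    (x₁ x₂ v₁ v₂ : ℝ → Fin N → EuclideanSpace ℝ (Fin d))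
    (t : ℝ)
    (hv₁ : ∀ i, HasDerivAt (fun s => v₁ s i)
      ((N : ℝ)⁻¹ • ∑ j, ψ ‖x₁ t j - x₁ t i‖ • (v₁ t j - v₁ t i)) t)
    (hv₂ : ∀ i, HasDerivAt (fun s => v₂ s i)
      ((N : ℝ)⁻¹ • ∑ j, ψ ‖x₂ t j - x₂ t i‖ • (v₂ t j - v₂ t i)) t) :
    ∃ r' : ℝ,
      HasDerivAt (fun s => ∑ i, ‖v₁ s i - v₂ s i‖ ^ 2) r' t ∧
      r' ≤ (N : ℝ)⁻¹ * ∑ i, ∑ j,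
        ‖(v₁ t i - v₂ t i) - (v₁ t j - v₂ t j)‖ * ‖v₂ t j - v₂ t i‖ *
          |ψ ‖x₁ t j - x₁ t i‖ - ψ ‖x₂ t j - x₂ t i‖| :=
  stmt_15_general N d ψ hψ x₁ x₂ v₁ v₂ t hv₁ hv₂
end
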